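/- Let H be a graph such that λ*(H) > 0, where λ*(H) := min over edges e of H of the maximum of e(F)/v(F) over all subgraphs F of H − e with v(F) ≥ 1. Then there exists a constant c(H) > 0 such that p_c(n,H) ≥ c(H)·n^{-1/λ*(H)} for every n ≥ 2. -/

import Mathlib

open Finset

/-- The edge set of the copy of `H` under the injection `f`. -/
def copyEdges {W V : Type*} (H : SimpleGraph W) (f : W ↪ V) : Set (Sym2 V) :=
  Sym2.map f '' H.edgeSet

/-- One step of the `H`-bootstrap process: infect every edge `e` for which some copy of `H`
contains `e` and has all its other edges already infected. -/
def bootStep {W V : Type*} (H : SimpleGraph W) (E : Set (Sym2 V)) : Set (Sym2 V) :=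
  E ∪ {e | ∃ f : W ↪ V, e ∈ copyEdges H f ∧ copyEdges H f ⊆ insert e E}

/-- The closure of `E` under the `H`-bootstrap process. -/
def bootClosure {W V : Type*} (H : SimpleGraph W) (E : Set (Sym2 V)) : Set (Sym2 V) :=
  ⋃ t, (bootStep H)^[t] E

/-- `E` percolates in the `H`-bootstrap process on the complete graph on `V`. -/
def Percolates {W V : Type*} (H : SimpleGraph W) (E : Set (Sym2 V)) : Prop :=
  bootClosure H E = (⊤ : SimpleGraph V).edgeSet

/-- The expectation of `X` under the Erdős–Rényi random graph `G_{n,p}`,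
written as a sum over all graphs on `[n]`, weighted by their probabilities. -/
noncomputable def gnpExp (n : ℕ) (p : ℝ) (X : Finset (Sym2 (Fin n)) → ℝ) : ℝ :=
  ∑ E ∈ (⊤ : SimpleGraph (Fin n)).edgeFinset.powerset,
    p ^ E.card * (1 - p) ^ ((⊤ : SimpleGraph (Fin n)).edgeFinset.card - E.card) * X E

/- probability of event `A` under `G_{n,p}` -/
open Classical in
noncomputable def gnpProb (n : ℕ) (p : ℝ) (A : Finset (Sym2 (Fin n)) → Prop) : ℝ :=
  gnpExp n p (fun E => if A E then 1 else 0)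

/-- The critical probability for `H`-bootstrap percolation on `K_n`. -/
noncomputable def pc {W : Type*} (n : ℕ) (H : SimpleGraph W) : ℝ :=
  sInf {p : ℝ | p ∈ Set.Icc (0 : ℝ) 1 ∧
    1 / 2 ≤ gnpProb n p (fun E => Percolates H (↑E : Set (Sym2 (Fin n))))}

/-- `λ(r) = (C(r,2) - 2)/(r - 2)`. -/
noncomputable def lam (r : ℕ) : ℝ := ((r.choose 2 : ℝ) - 2) / ((r : ℝ) - 2)

/-- `λ*(H) = min_{e ∈ E(H)} max_{F ⊆ H - e, v(F) ≥ 1} e(F)/v(F)`. -/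
noncomputable def lamStar {W : Type*} (H : SimpleGraph W) : ℝ :=
  sInf {x : ℝ | ∃ e ∈ H.edgeSet, x =
    sSup {y : ℝ | ∃ F : (H.deleteEdges {e}).Subgraph, F.verts.Nonempty ∧
      y = (F.edgeSet.ncard : ℝ) / (F.verts.ncard : ℝ)}}

/-!
If `G_{n,p}` percolates, then either it is already complete, or the first edge added by the
process completes a copy of `H - e` for some edge `e` of `H`. By the definition of `λ*(H)`, every
`H - e` contains a subgraph `F` with `e(F) ≥ λ*(H) v(F)`, and by the first moment method a copy of
`F` appears with probability at most `n^{v(F)} p^{e(F)} ≤ (p n^{1/λ*(H)})^{e(F)}`. Taking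
`p < c n^{-1/λ*(H)}` with `c` small compared to `1 / e(H)`, a union bound over the `e(H) + 1`
cases keeps the probability of percolation below `1/2`.
-/

section Probability

variable {n : ℕ} {p : ℝ}

lemma Finset.sum_powerset_superset_pow_mul_pow {α R : Type*} [DecidableEq α] [CommSemiring R]
    {S T : Finset α} (hST : S ⊆ T) (a b : R) :
    ∑ E ∈ T.powerset with S ⊆ E, a ^ #E * b ^ (#T - #E) = a ^ #S * (a + b) ^ #(T \ S) := by
  have hIcc : {E ∈ T.powerset | S ⊆ E} = Icc S T := by
    ext E
    simp only [mem_filter, mem_powerset, mem_Icc, and_comm]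
  have hinj : Set.InjOn (S ∪ ·) (T \ S).powerset := by
    intro t ht u hu htu
    have hdisj : ∀ v ∈ (T \ S).powerset, Disjoint S v := fun v hv =>
      disjoint_of_subset_right (mem_powerset.mp hv) disjoint_sdiff
    rw [← union_sdiff_cancel_left (hdisj t ht), ← union_sdiff_cancel_left (hdisj u hu)]
    exact congrArg (· \ S) htu
  rw [hIcc, Icc_eq_image_powerset hST, sum_image hinj, ← sum_pow_mul_eq_add_pow, mul_sum]
  refine sum_congr rfl fun t ht => ?_
  have htS : Disjoint S t := disjoint_of_subset_right (mem_powerset.mp ht) disjoint_sdiff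
  have hcard : #(T \ S) = #T - #S := card_sdiff_of_subset hST
  have htT : #t ≤ #(T \ S) := card_le_card (mem_powerset.mp ht)
  rw [card_union_of_disjoint htS, pow_add, mul_assoc, hcard]
  congr 3
  omega

lemma gnpProb_superset {S : Finset (Sym2 (Fin n))}
    (hS : S ⊆ (⊤ : SimpleGraph (Fin n)).edgeFinset) :
    gnpProb n p (S ⊆ ·) = p ^ #S := by
  classical
  simp only [gnpProb, gnpExp, mul_ite, mul_one, mul_zero]
  rw [← sum_filter, sum_powerset_superset_pow_mul_pow hS, add_sub_cancel, one_pow, mul_one]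

lemma gnpProb_le_sum (hp0 : 0 ≤ p) (hp1 : p ≤ 1) {ι : Type*} (s : Finset ι)
    (A : Finset (Sym2 (Fin n)) → Prop) (B : ι → Finset (Sym2 (Fin n)) → Prop)
    (h : ∀ E ⊆ (⊤ : SimpleGraph (Fin n)).edgeFinset, A E → ∃ i ∈ s, B i E) :
    gnpProb n p A ≤ ∑ i ∈ s, gnpProb n p (B i) := by
  classical
  simp only [gnpProb, gnpExp]
  rw [sum_comm]
  refine sum_le_sum fun E hE => ?_
  rw [← mul_sum]
  have hweight : 0 ≤ p ^ #E * (1 - p) ^ (#(⊤ : SimpleGraph (Fin n)).edgeFinset - #E) := by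
    have : 0 ≤ 1 - p := by linarith
    positivity
  refine mul_le_mul_of_nonneg_left ?_ hweight
  split_ifs with hA
  · obtain ⟨i, hi, hB⟩ := h E (mem_powerset.mp hE) hA
    calc (1 : ℝ) = if B i E then 1 else 0 := (if_pos hB).symm
      _ ≤ ∑ j ∈ s, if B j E then 1 else 0 :=
        single_le_sum (f := fun j => if B j E then (1 : ℝ) else 0)
          (fun j _ => by positivity) hi
  · exact sum_nonneg fun j _ => by positivity

lemma gnpProb_mono (hp0 : 0 ≤ p) (hp1 : p ≤ 1) {A B : Finset (Sym2 (Fin n)) → Prop}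
    (h : ∀ E ⊆ (⊤ : SimpleGraph (Fin n)).edgeFinset, A E → B E) :
    gnpProb n p A ≤ gnpProb n p B := by
  simpa using gnpProb_le_sum hp0 hp1 {()} A (fun _ => B) fun E hE hA =>
    ⟨(), mem_singleton_self _, h E hE hA⟩

lemma gnpProb_edgeFinset_top_subset_le (hn : 2 ≤ n) (hp0 : 0 ≤ p) (hp1 : p ≤ 1) :
    gnpProb n p ((⊤ : SimpleGraph (Fin n)).edgeFinset ⊆ ·) ≤ p := by
  have hN : #(⊤ : SimpleGraph (Fin n)).edgeFinset ≠ 0 := by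
    rw [SimpleGraph.card_edgeFinset_top_eq_card_choose_two, Fintype.card_fin]
    exact (Nat.choose_pos hn).ne'
  exact (gnpProb_superset subset_rfl).trans_le (pow_le_of_le_one hp0 hp1 hN)

end Probability

section Bootstrap

variable {W V : Type*} (H : SimpleGraph W)

lemma copyEdges_eq_edgeSet_map (f : W ↪ V) : copyEdges H f = (H.map f).edgeSet :=
  (H.edgeSet_map f).symm

lemma copyEdges_subset_edgeSet_top (f : W ↪ V) :
    copyEdges H f ⊆ (⊤ : SimpleGraph V).edgeSet := by
  rw [copyEdges_eq_edgeSet_map]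
  exact SimpleGraph.edgeSet_mono le_top

lemma copyEdges_coe_subset {G : SimpleGraph W} (F : G.Subgraph) (f : W ↪ V) :
    copyEdges F.coe ((Function.Embedding.subtype _).trans f) ⊆ copyEdges G f := by
  rw [copyEdges, copyEdges, Function.Embedding.coe_trans, Sym2.map_comp, Set.image_comp,
    Function.Embedding.coe_subtype, F.image_coe_edgeSet_coe]
  exact Set.image_mono F.edgeSet_subset

lemma ncard_copyEdges (f : W ↪ V) : (copyEdges H f).ncard = H.edgeSet.ncard :=
  Set.ncard_image_of_injective _ f.sym2Map.injective

lemma bootStep_subset_edgeSet_top {E : Set (Sym2 V)} (hE : E ⊆ (⊤ : SimpleGraph V).edgeSet) :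
    bootStep H E ⊆ (⊤ : SimpleGraph V).edgeSet := by
  rintro e (he | ⟨f, he, -⟩)
  exacts [hE he, copyEdges_subset_edgeSet_top H f he]

lemma percolates_edgeSet_top : Percolates H (⊤ : SimpleGraph V).edgeSet := by
  refine (Set.iUnion_subset fun t => ?_).antisymm (Set.subset_iUnion_of_subset 0 subset_rfl)
  induction t with
  | zero => exact subset_rfl
  | succ t ih =>
    rw [Function.iterate_succ_apply']
    exact bootStep_subset_edgeSet_top H ih

/-- If `E` percolates but is not complete, it is not closed under `bootStep`, and the first edge
it gains completes a copy of `H` all of whose other edges are already present. -/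
lemma edgeSet_top_subset_or_exists_copyEdges_deleteEdges_subset {E : Set (Sym2 V)}
    (hperc : Percolates H E) :
    (⊤ : SimpleGraph V).edgeSet ⊆ E ∨ ∃ e ∈ H.edgeSet, ∃ f : W ↪ V,
      copyEdges (H.deleteEdges {e}) f ⊆ E := by
  refine or_iff_not_imp_left.mpr fun htop => ?_
  have hstep : ¬ bootStep H E ⊆ E := by
    intro h
    have hfix : ∀ t, (bootStep H)^[t] E = E :=
      Function.iterate_fixed (Set.Subset.antisymm h Set.subset_union_left)
    exact htop (by rw [← hperc, bootClosure]; simp only [hfix, Set.iUnion_const, subset_rfl])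
  obtain ⟨e', he' | ⟨f, ⟨e, he, rfl⟩, hsub⟩, he'E⟩ := Set.not_subset.mp hstep
  · exact absurd he' he'E
  refine ⟨e, he, f, ?_⟩
  rintro _ ⟨d, hd, rfl⟩
  rw [SimpleGraph.edgeSet_deleteEdges] at hd
  refine (Set.mem_insert_iff.mp (hsub ⟨d, hd.1, rfl⟩)).resolve_left fun hde => hd.2 ?_
  exact f.sym2Map.injective hde

end Bootstrap

lemma gnpProb_copyEdges_subset {U : Type*} (K : SimpleGraph U) {n : ℕ} (p : ℝ) (g : U ↪ Fin n) :
    gnpProb n p (fun E => copyEdges K g ⊆ ↑E) = p ^ K.edgeSet.ncard := by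
  classical
  have hcoe : ((K.map g).edgeFinset : Set (Sym2 (Fin n))) = copyEdges K g := by
    rw [SimpleGraph.coe_edgeFinset, copyEdges_eq_edgeSet_map]
  have htop : (K.map g).edgeFinset ⊆ (⊤ : SimpleGraph (Fin n)).edgeFinset := by
    rw [← coe_subset, hcoe, SimpleGraph.coe_edgeFinset]
    exact copyEdges_subset_edgeSet_top K g
  simp_rw [← hcoe, coe_subset]
  rw [gnpProb_superset htop, ← Set.ncard_coe_finset, hcoe, ncard_copyEdges]

lemma gnpProb_le_of_exists_copyEdges_subset {U : Type*} [Fintype U] (K : SimpleGraph U)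
    {n : ℕ} {p : ℝ} (hp0 : 0 ≤ p) (hp1 : p ≤ 1) {A : Finset (Sym2 (Fin n)) → Prop}
    (hA : ∀ E, A E → ∃ g : U ↪ Fin n, copyEdges K g ⊆ ↑E) :
    gnpProb n p A ≤ (n : ℝ) ^ Fintype.card U * p ^ K.edgeSet.ncard := by
  classical
  have hcount : (Fintype.card (U ↪ Fin n) : ℝ) ≤ (n : ℝ) ^ Fintype.card U := by
    rw [Fintype.card_embedding_eq, Fintype.card_fin]
    exact_mod_cast Nat.descFactorial_le_pow n _
  calc gnpProb n p A
      ≤ ∑ g : U ↪ Fin n, gnpProb n p (fun E => copyEdges K g ⊆ ↑E) :=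
        gnpProb_le_sum hp0 hp1 univ A _ fun E _ hE =>
          (hA E hE).imp fun g hg => ⟨mem_univ g, hg⟩
    _ = Fintype.card (U ↪ Fin n) * p ^ K.edgeSet.ncard := by
        simp only [gnpProb_copyEdges_subset, sum_const, card_univ, nsmul_eq_mul]
    _ ≤ (n : ℝ) ^ Fintype.card U * p ^ K.edgeSet.ncard :=
        mul_le_mul_of_nonneg_right hcount (by positivity)

lemma SimpleGraph.Subgraph.ncard_edgeSet_coe {W : Type*} {G : SimpleGraph W} (F : G.Subgraph) :
    F.coe.edgeSet.ncard = F.edgeSet.ncard := by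
  rw [← F.image_coe_edgeSet_coe,
    Set.ncard_image_of_injective _ (Sym2.map.injective Subtype.val_injective)]

lemma finite_subgraph_densities {W : Type*} [Finite W] (G : SimpleGraph W) :
    {y : ℝ | ∃ F : G.Subgraph, F.verts.Nonempty ∧
      y = (F.edgeSet.ncard : ℝ) / (F.verts.ncard : ℝ)}.Finite :=
  (Set.finite_range fun F : G.Subgraph => (F.edgeSet.ncard : ℝ) / (F.verts.ncard : ℝ)).subset
    fun _ ⟨F, _, hy⟩ => ⟨F, hy.symm⟩

lemma lamStar_le_sSup {W : Type*} {H : SimpleGraph W} (hpos : 0 < lamStar H) {e : Sym2 W}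
    (he : e ∈ H.edgeSet) :
    lamStar H ≤ sSup {y : ℝ | ∃ F : (H.deleteEdges {e}).Subgraph, F.verts.Nonempty ∧
      y = (F.edgeSet.ncard : ℝ) / (F.verts.ncard : ℝ)} := by
  have hbdd : BddBelow {x : ℝ | ∃ e ∈ H.edgeSet, x =
      sSup {y : ℝ | ∃ F : (H.deleteEdges {e}).Subgraph, F.verts.Nonempty ∧
        y = (F.edgeSet.ncard : ℝ) / (F.verts.ncard : ℝ)}} := by
    by_contra hb
    rw [lamStar, Real.sInf_of_not_bddBelow hb] at hpos
    exact lt_irrefl _ hpos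
  exact csInf_le hbdd ⟨e, he, rfl⟩

/-- The maximum in the definition of `λ*` is attained, as `H - e` has finitely many
subgraphs. -/
lemma exists_dense_subgraph_deleteEdges {W : Type*} [Finite W] {H : SimpleGraph W}
    (hpos : 0 < lamStar H) {e : Sym2 W} (he : e ∈ H.edgeSet) :
    ∃ F : (H.deleteEdges {e}).Subgraph, F.verts.Nonempty ∧
      lamStar H * F.verts.ncard ≤ F.edgeSet.ncard := by
  obtain ⟨w, -⟩ : ∃ w, w ∈ e := ⟨e.out.1, Sym2.out_fst_mem e⟩
  have hne : {y : ℝ | ∃ F : (H.deleteEdges {e}).Subgraph, F.verts.Nonempty ∧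
      y = (F.edgeSet.ncard : ℝ) / (F.verts.ncard : ℝ)}.Nonempty :=
    ⟨_, (H.deleteEdges {e}).singletonSubgraph w, Set.singleton_nonempty w, rfl⟩
  obtain ⟨F, hF, hFmax⟩ := hne.csSup_mem (finite_subgraph_densities _)
  refine ⟨F, hF, ?_⟩
  have hcard : (0 : ℝ) < F.verts.ncard := by
    exact_mod_cast (Set.ncard_pos F.verts.toFinite).mpr hF
  rw [← le_div_iff₀ hcard, ← hFmax]
  exact lamStar_le_sSup hpos he

lemma pow_mul_pow_le_of_le_mul_rpow {x p c l : ℝ} {m k : ℕ} (hl : 0 < l) (hx : 1 ≤ x)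
    (hp0 : 0 ≤ p) (hp : p ≤ c * x ^ (-(1 / l))) (hc1 : c ≤ 1) (hk : k ≠ 0) (hmk : l * m ≤ k) :
    x ^ m * p ^ k ≤ c := by
  have hx0 : 0 ≤ x := zero_le_one.trans hx
  have hpc : p * x ^ (1 / l) ≤ c := by
    have := mul_le_mul_of_nonneg_right hp (Real.rpow_nonneg hx0 (1 / l))
    rwa [mul_assoc, ← Real.rpow_add (by linarith), neg_add_cancel, Real.rpow_zero,
      mul_one] at this
  have hc0 : 0 ≤ c := (by positivity : 0 ≤ p * x ^ (1 / l)).trans hpc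
  have hm : (m : ℝ) ≤ 1 / l * k := by
    rw [one_div_mul_eq_div, le_div_iff₀ hl, mul_comm]
    exact hmk
  calc x ^ m * p ^ k ≤ x ^ (1 / l * k) * p ^ k := by
        rw [← Real.rpow_natCast x m]
        gcongr
    _ = (p * x ^ (1 / l)) ^ k := by rw [Real.rpow_mul_natCast hx0, mul_pow, mul_comm]
    _ ≤ c ^ k := by gcongr
    _ ≤ c := pow_le_of_le_one hc0 hc1 hk

lemma gnpProb_exists_copyEdges_deleteEdges_le {W : Type*} [Finite W] {H : SimpleGraph W}
    (hpos : 0 < lamStar H) {e : Sym2 W} (he : e ∈ H.edgeSet) {n : ℕ} {p c : ℝ} (hn : 1 ≤ n)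
    (hp0 : 0 ≤ p) (hp1 : p ≤ 1) (hp : p ≤ c * (n : ℝ) ^ (-(1 / lamStar H))) (hc1 : c ≤ 1) :
    gnpProb n p (fun E => ∃ f : W ↪ Fin n, copyEdges (H.deleteEdges {e}) f ⊆ ↑E) ≤ c := by
  obtain ⟨F, hF, hdense⟩ := exists_dense_subgraph_deleteEdges hpos he
  have := Fintype.ofFinite F.verts
  have hcard : Fintype.card F.verts = F.verts.ncard := by
    rw [← Nat.card_eq_fintype_card, Nat.card_coe_set_eq]
  have hk : F.edgeSet.ncard ≠ 0 := by
    have hm : (0 : ℝ) < F.verts.ncard := by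
      exact_mod_cast (Set.ncard_pos F.verts.toFinite).mpr hF
    have hk : (0 : ℝ) < F.edgeSet.ncard := (mul_pos hpos hm).trans_le hdense
    exact_mod_cast hk.ne'
  calc _ ≤ (n : ℝ) ^ Fintype.card F.verts * p ^ F.coe.edgeSet.ncard :=
        gnpProb_le_of_exists_copyEdges_subset F.coe hp0 hp1 fun E ⟨f, hf⟩ =>
          ⟨_, (copyEdges_coe_subset F f).trans hf⟩
    _ ≤ c := by
        rw [hcard, F.ncard_edgeSet_coe]
        exact pow_mul_pow_le_of_le_mul_rpow hpos (by exact_mod_cast hn) hp0 hp hc1 hk hdense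

lemma le_pc_of_forall_lt_gnpProb_lt {W : Type*} (H : SimpleGraph W) {n : ℕ} {q : ℝ}
    (h : ∀ p, 0 ≤ p → p ≤ 1 → p < q →
      gnpProb n p (fun E => Percolates H (↑E : Set (Sym2 (Fin n)))) < 1 / 2) :
    q ≤ pc n H := by
  have hone : 1 ≤ gnpProb n 1 (fun E => Percolates H (↑E : Set (Sym2 (Fin n)))) := by
    calc (1 : ℝ) = gnpProb n 1 ((⊤ : SimpleGraph (Fin n)).edgeFinset ⊆ ·) := by
          rw [gnpProb_superset subset_rfl, one_pow]
      _ ≤ _ := gnpProb_mono zero_le_one le_rfl fun E hE htop => by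
          rw [subset_antisymm hE htop, SimpleGraph.coe_edgeFinset]
          exact percolates_edgeSet_top H
  refine le_csInf ⟨1, ⟨le_rfl.trans' zero_le_one, le_rfl⟩, by linarith⟩ ?_
  rintro p ⟨⟨hp0, hp1⟩, hhalf⟩
  by_contra! hpq
  exact (h p hp0 hp1 hpq).not_ge hhalf

/-- **Proposition 29.** For every graph `H` with `λ*(H) > 0` there is a constant
`c(H) > 0` such that `p_c(n,H) ≥ c(H) n^{-1/λ*(H)}` for every `n ≥ 2`. -/
theorem pc_general_lower {W : Type*} [Fintype W] (H : SimpleGraph W)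
    (hpos : 0 < lamStar H) :
    ∃ c : ℝ, 0 < c ∧ ∀ n : ℕ, 2 ≤ n →
      c * (n : ℝ) ^ (-(1 / lamStar H)) ≤ pc n H := by
  classical
  set M : ℝ := (Fintype.card (Option H.edgeSet) : ℝ) with hM_def
  have hM : 1 ≤ M := by rw [hM_def]; exact_mod_cast Fintype.card_pos
  refine ⟨1 / (4 * M), by positivity, fun n hn => le_pc_of_forall_lt_gnpProb_lt H
    fun p hp0 hp1 hp => ?_⟩
  have hn1 : (1 : ℝ) ≤ n := by exact_mod_cast one_le_two.trans hn
  have hc1 : 1 / (4 * M) ≤ (1 : ℝ) := by rw [div_le_one (by positivity)]; linarith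
  have hpc : p ≤ 1 / (4 * M) := hp.le.trans <| mul_le_of_le_one_right (by positivity) <|
    Real.rpow_le_one_of_one_le_of_nonpos hn1 (neg_nonpos.mpr (by positivity))
  let B : Option H.edgeSet → Finset (Sym2 (Fin n)) → Prop
    | none, E => (⊤ : SimpleGraph (Fin n)).edgeFinset ⊆ E
    | some e, E => ∃ f : W ↪ Fin n, copyEdges (H.deleteEdges {e.1}) f ⊆ ↑E
  calc gnpProb n p (fun E => Percolates H (↑E : Set (Sym2 (Fin n))))
      ≤ ∑ i, gnpProb n p (B i) := gnpProb_le_sum hp0 hp1 univ _ B fun E _ hperc =>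
        (edgeSet_top_subset_or_exists_copyEdges_deleteEdges_subset H hperc).elim
          (fun htop => ⟨none, mem_univ _, fun _ he => htop (SimpleGraph.mem_edgeFinset.mp he)⟩)
          fun ⟨e, he, hcopy⟩ => ⟨some ⟨e, he⟩, mem_univ _, hcopy⟩
    _ ≤ ∑ _i : Option H.edgeSet, 1 / (4 * M) := sum_le_sum fun i _ => match i with
        | none => (gnpProb_edgeFinset_top_subset_le hn hp0 hp1).trans hpc
        | some ⟨_, he⟩ =>
          gnpProb_exists_copyEdges_deleteEdges_le hpos he (by omega) hp0 hp1 hp.le hc1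
    _ < 1 / 2 := by
        rw [sum_const, card_univ, nsmul_eq_mul, ← hM_def]
        field_simp
        norm_num
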